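/- arXiv:2506.08689 — 2 statements merged into one kernel-verified Lean document; each statement's English description precedes it below -/
import Mathlib

section
/- Let X ⊆ ℝ^d, ρ ≥ 1, P a Borel probability measure on X with finite ρ-th moment, R = {R_1,…,R_N} a measurable partition of X, and C = {c_1,…,c_N} ⊂ X. Let f : X → Y ⊆ ℝ^q be Lipschitz continuous with Lipschitz constant L_f with respect to the norm used in the Wasserstein distance. Define θ_d := ( Σ_{k=1}^N ∫_{R_k} ‖x − c_k‖^ρ dP(x) )^{1/ρ}. Then for any θ ≥ 0, sup_{Q ∈ B_θ(P)} W_ρ(f#Q, f#Δ_{R,C}#P) ≤ L_f (θ + θ_d). -/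
/-!
Push a coupling `γ` of `P` and `Q` forward along `(x, y) ↦ (f y, f (Δ x))`, where
`Δ = quantMap R c`: this couples `f#Q` with `f#Δ#P`, and its cost is at most
`L_f ‖y - Δ x‖_{Lᵖ(γ)}`. By Minkowski, `‖y - Δ x‖_{Lᵖ(γ)} ≤ ‖x - y‖_{Lᵖ(γ)} + ‖x - Δ x‖_{Lᵖ(P)}`,
and the last term is `θ_d` since `Δ` is constant `c k` on each cell `R k`. Minimising over `γ`
gives the bound; since the coupling is built by hand, no gluing lemma (triangle inequality for
`W_ρ`) is needed. Infima are taken in `ℝ≥0∞` (`eWass`), where they commute with `L_f * ·` and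
`· + θ_d`.
-/

open MeasureTheory ENNReal

noncomputable section

/-- `ℝ^d` with the Euclidean norm. -/
abbrev Euc (d : ℕ) : Type := EuclideanSpace ℝ (Fin d)

/-- The set of couplings `Γ(μ, ν)` of two measures: probability measures on the product
whose first marginal is `μ` and second marginal is `ν`. -/
def Couplings {β : Type*} [MeasurableSpace β] (μ ν : Measure β) :
    Set (Measure (β × β)) :=
  {γ | IsProbabilityMeasure γ ∧ γ.map Prod.fst = μ ∧ γ.map Prod.snd = ν}

/-- The ρ-Wasserstein distance
`W_ρ(μ, ν) = (inf_{γ ∈ Γ(μ,ν)} ∫ ‖x - y‖^ρ dγ(x,y))^{1/ρ}`. -/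
noncomputable def Wass {β : Type*} [MeasurableSpace β] [NormedAddCommGroup β]
    (ρ : ℝ) (μ ν : Measure β) : ℝ :=
  ((⨅ γ ∈ Couplings μ ν, ∫⁻ p, ENNReal.ofReal (‖p.1 - p.2‖ ^ ρ) ∂γ).toReal) ^ (1/ρ)

/-- `μ` has finite ρ-th moment: `∫ ‖x‖^ρ dμ(x) < ∞`. -/
def HasFiniteMoment {β : Type*} [MeasurableSpace β] [NormedAddCommGroup β]
    (ρ : ℝ) (μ : Measure β) : Prop :=
  ∫⁻ x, ENNReal.ofReal (‖x‖ ^ ρ) ∂μ < ⊤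

/-- A measurable partition of a set `X` into `N` regions. -/
def IsMeasPartition {β : Type*} [MeasurableSpace β] {N : ℕ}
    (R : Fin N → Set β) (X : Set β) : Prop :=
  (∀ i, MeasurableSet (R i)) ∧ (⋃ i, R i) = X ∧ ∀ i j, i ≠ j → R i ∩ R j = ∅

/-- The quantization operator `Δ_{R,C}(x) = Σ_i c_i 1_{R_i}(x)`. -/
noncomputable def quantMap {β : Type*} [AddCommMonoid β] {N : ℕ}
    (R : Fin N → Set β) (c : Fin N → β) (x : β) : β :=
  ∑ i, (R i).indicator (fun _ => c i) x

open scoped NNReal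

theorem lintegral_ofReal_norm_rpow {α E : Type*} [MeasurableSpace α] [NormedAddCommGroup E]
    {ρ : ℝ} (hρ : 0 < ρ) (g : α → E) (μ : Measure α) :
    ∫⁻ x, ENNReal.ofReal (‖g x‖ ^ ρ) ∂μ = eLpNorm g (ENNReal.ofReal ρ) μ ^ ρ := by
  have := eLpNorm_nnreal_pow_eq_lintegral (f := g) (μ := μ) (p := ρ.toNNReal) (by simpa using hρ)
  rw [Real.coe_toNNReal _ hρ.le] at this
  rw [ENNReal.ofReal, this]
  refine lintegral_congr fun x => ?_
  rw [← ENNReal.ofReal_rpow_of_nonneg (norm_nonneg _) hρ.le, ofReal_norm]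

section Couplings

variable {β β' : Type*} [MeasurableSpace β] [MeasurableSpace β'] {μ ν : Measure β}
  {γ : Measure (β × β)}

theorem prod_mem_couplings [IsProbabilityMeasure μ] [IsProbabilityMeasure ν] :
    μ.prod ν ∈ Couplings μ ν :=
  ⟨inferInstance, by simp, by simp⟩

instance [IsProbabilityMeasure μ] [IsProbabilityMeasure ν] : Nonempty (Couplings μ ν) :=
  ⟨⟨μ.prod ν, prod_mem_couplings⟩⟩

theorem map_swap_mem_couplings (hγ : γ ∈ Couplings μ ν) : γ.map Prod.swap ∈ Couplings ν μ := by
  obtain ⟨_, hfst, hsnd⟩ := hγ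
  refine ⟨Measure.isProbabilityMeasure_map measurable_swap.aemeasurable, ?_, ?_⟩
  · rw [Measure.map_map measurable_fst measurable_swap]
    exact hsnd
  · rw [Measure.map_map measurable_snd measurable_swap]
    exact hfst

theorem map_prodMap_mem_couplings (hγ : γ ∈ Couplings μ ν) {g h : β → β'} (hg : Measurable g)
    (hh : Measurable h) : γ.map (Prod.map g h) ∈ Couplings (μ.map g) (ν.map h) := by
  obtain ⟨_, hfst, hsnd⟩ := hγ
  refine ⟨Measure.isProbabilityMeasure_map (hg.prodMap hh).aemeasurable, ?_, ?_⟩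
  · rw [Measure.map_map measurable_fst (hg.prodMap hh), ← hfst, Measure.map_map hg measurable_fst]
    rfl
  · rw [Measure.map_map measurable_snd (hg.prodMap hh), ← hsnd, Measure.map_map hh measurable_snd]
    rfl

theorem eLpNorm_comp_fst_of_mem_couplings {F : Type*} [NormedAddCommGroup F] {p : ℝ≥0∞}
    (hγ : γ ∈ Couplings μ ν) {g : β → F} (hg : AEStronglyMeasurable g μ) :
    eLpNorm (fun x => g x.1) p γ = eLpNorm g p μ := by
  rw [← hγ.2.1] at hg ⊢
  exact (eLpNorm_map_measure hg measurable_fst.aemeasurable).symm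

theorem eLpNorm_comp_snd_of_mem_couplings {F : Type*} [NormedAddCommGroup F] {p : ℝ≥0∞}
    (hγ : γ ∈ Couplings μ ν) {g : β → F} (hg : AEStronglyMeasurable g ν) :
    eLpNorm (fun x => g x.2) p γ = eLpNorm g p ν := by
  rw [← hγ.2.2] at hg ⊢
  exact (eLpNorm_map_measure hg measurable_snd.aemeasurable).symm

end Couplings

section eWass

variable {β : Type*} [MeasurableSpace β] [NormedAddCommGroup β] {p : ℝ≥0∞} {μ ν : Measure β}

def eWass (p : ℝ≥0∞) (μ ν : Measure β) : ℝ≥0∞ :=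
  ⨅ γ : Couplings μ ν, eLpNorm (fun x : β × β => x.1 - x.2) p (γ : Measure (β × β))

theorem eWass_le_of_mem_couplings {γ : Measure (β × β)} (hγ : γ ∈ Couplings μ ν) :
    eWass p μ ν ≤ eLpNorm (fun x : β × β => x.1 - x.2) p γ :=
  iInf_le (fun γ : Couplings μ ν => eLpNorm (fun x : β × β => x.1 - x.2) p (γ : Measure (β × β)))
    ⟨γ, hγ⟩

theorem Wass_eq_toReal_eWass {ρ : ℝ} (hρ : 0 < ρ) (μ ν : Measure β) :
    Wass ρ μ ν = (eWass (ENNReal.ofReal ρ) μ ν).toReal := by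
  have hcost : ⨅ γ ∈ Couplings μ ν, ∫⁻ x, ENNReal.ofReal (‖x.1 - x.2‖ ^ ρ) ∂γ
      = eWass (ENNReal.ofReal ρ) μ ν ^ ρ := by
    simp_rw [lintegral_ofReal_norm_rpow hρ (fun x : β × β => x.1 - x.2)]
    rw [iInf_subtype', eWass]
    exact ((ENNReal.orderIsoRpow ρ hρ).map_iInf _).symm
  rw [Wass, hcost, ENNReal.toReal_rpow, ← ENNReal.rpow_mul, mul_one_div_cancel hρ.ne',
    ENNReal.rpow_one]

end eWass

section Lipschitz

variable {E F : Type*} [NormedAddCommGroup E] [MeasurableSpace E] [BorelSpace E]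
  [NormedAddCommGroup F] [MeasurableSpace F] [BorelSpace F] [SecondCountableTopology F]
  {p : ℝ≥0∞} {μ ν : Measure E}

theorem eWass_map_le_of_lipschitzWith [IsProbabilityMeasure μ] [IsProbabilityMeasure ν]
    {f : E → F} {L : ℝ≥0} (hf : LipschitzWith L f) :
    eWass p (μ.map f) (ν.map f) ≤ L * eWass p μ ν := by
  refine (le_iInf fun ⟨γ, hγ⟩ => ?_).trans_eq
    (ENNReal.mul_iInf fun h => absurd h ENNReal.coe_ne_top).symm
  have hfm : Measurable f := hf.continuous.measurable
  calc eWass p (μ.map f) (ν.map f)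
      ≤ eLpNorm (fun x : F × F => x.1 - x.2) p (γ.map (Prod.map f f)) :=
        eWass_le_of_mem_couplings (map_prodMap_mem_couplings hγ hfm hfm)
    _ = eLpNorm (fun x : E × E => f x.1 - f x.2) p γ :=
        eLpNorm_map_measure (continuous_fst.sub continuous_snd).aestronglyMeasurable
          (hfm.prodMap hfm).aemeasurable
    _ ≤ L • eLpNorm (fun x : E × E => x.1 - x.2) p γ :=
        eLpNorm_le_nnreal_smul_eLpNorm_of_ae_le_mul' (ae_of_all _ fun x => by
          simpa only [edist_eq_enorm_sub] using hf.edist_le_mul x.1 x.2) p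

variable [SecondCountableTopology E]

theorem HasFiniteMoment.memLp_id {ρ : ℝ} (hρ : 0 < ρ) (h : HasFiniteMoment ρ μ) :
    MemLp id (ENNReal.ofReal ρ) μ :=
  ⟨aestronglyMeasurable_id, by
    rw [← ENNReal.rpow_lt_top_iff_of_pos hρ, ← lintegral_ofReal_norm_rpow hρ]
    exact h⟩

theorem eWass_lt_top [IsProbabilityMeasure μ] [IsProbabilityMeasure ν] (hp : 1 ≤ p)
    (hμ : MemLp id p μ) (hν : MemLp id p ν) : eWass p μ ν < ⊤ :=
  calc eWass p μ ν ≤ eLpNorm (fun x : E × E => x.1 - x.2) p (μ.prod ν) :=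
        eWass_le_of_mem_couplings prod_mem_couplings
    _ ≤ eLpNorm (fun x : E × E => id x.1) p (μ.prod ν)
          + eLpNorm (fun x : E × E => id x.2) p (μ.prod ν) :=
        eLpNorm_sub_le measurable_fst.aestronglyMeasurable measurable_snd.aestronglyMeasurable hp
    _ = eLpNorm id p μ + eLpNorm id p ν := by
        rw [eLpNorm_comp_fst_of_mem_couplings prod_mem_couplings hμ.1,
          eLpNorm_comp_snd_of_mem_couplings prod_mem_couplings hν.1]
    _ < ⊤ := ENNReal.add_lt_top.2 ⟨hμ.2, hν.2⟩

theorem eWass_le_eWass_swap : eWass p ν μ ≤ eWass p μ ν := by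
  refine le_iInf fun ⟨γ, hγ⟩ =>
    (eWass_le_of_mem_couplings (map_swap_mem_couplings hγ)).trans_eq ?_
  rw [eLpNorm_map_measure (g := fun x : E × E => x.1 - x.2)
    (continuous_fst.sub continuous_snd).aestronglyMeasurable measurable_swap.aemeasurable,
    ← eLpNorm_neg]
  congr 1
  ext x
  simp

theorem eWass_comm : eWass p μ ν = eWass p ν μ :=
  le_antisymm eWass_le_eWass_swap eWass_le_eWass_swap

theorem eWass_map_le_add (hp : 1 ≤ p) {g : E → E} (hg : Measurable g) :
    eWass p ν (μ.map g) ≤ eWass p ν μ + eLpNorm (fun x => x - g x) p μ := by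
  refine (le_iInf fun ⟨γ, hγ⟩ => ?_).trans_eq ENNReal.iInf_add.symm
  have hγ' := map_prodMap_mem_couplings hγ measurable_id hg
  rw [Measure.map_id] at hγ'
  calc eWass p ν (μ.map g)
      ≤ eLpNorm (fun x : E × E => x.1 - x.2) p (γ.map (Prod.map id g)) :=
        eWass_le_of_mem_couplings hγ'
    _ = eLpNorm (fun x : E × E => (x.1 - x.2) + (x.2 - g x.2)) p γ := by
        rw [eLpNorm_map_measure (g := fun x : E × E => x.1 - x.2)
          (continuous_fst.sub continuous_snd).aestronglyMeasurable
          (measurable_id.prodMap hg).aemeasurable]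
        congr 1
        ext x
        simp
    _ ≤ eLpNorm (fun x : E × E => x.1 - x.2) p γ
          + eLpNorm (fun x : E × E => x.2 - g x.2) p γ :=
        eLpNorm_add_le (measurable_fst.sub measurable_snd).aestronglyMeasurable
          (measurable_snd.sub (hg.comp measurable_snd)).aestronglyMeasurable hp
    _ = eLpNorm (fun x : E × E => x.1 - x.2) p γ + eLpNorm (fun x => x - g x) p μ := by
        rw [eLpNorm_comp_snd_of_mem_couplings (g := fun x => x - g x) hγ
          (measurable_id.sub hg).aestronglyMeasurable]

end Lipschitz

section Quantization

variable {β : Type*} {N : ℕ} {R : Fin N → Set β} {X : Set β}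

theorem quantMap_eq_of_mem [AddCommMonoid β] (hdisj : ∀ i j, i ≠ j → R i ∩ R j = ∅)
    (c : Fin N → β) {k : Fin N} {x : β} (hx : x ∈ R k) : quantMap R c x = c k := by
  rw [quantMap, Finset.sum_eq_single_of_mem k (Finset.mem_univ k) fun i _ hik =>
    Set.indicator_of_notMem (fun hxi => Set.notMem_empty x (hdisj i k hik ▸ ⟨hxi, hx⟩)) _,
    Set.indicator_of_mem hx]

theorem lintegral_comp_quantMap [MeasurableSpace β] [AddCommMonoid β] {P : Measure β}
    (hR : IsMeasPartition R X) (hPX : ∀ᵐ x ∂P, x ∈ X) (c : Fin N → β) (φ : β → β → ℝ≥0∞) :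
    ∫⁻ x, φ x (quantMap R c x) ∂P = ∑ k, ∫⁻ x in R k, φ x (c k) ∂P := by
  conv_lhs => rw [← Measure.restrict_eq_self_of_ae_mem hPX, ← hR.2.1]
  rw [lintegral_iUnion hR.1 fun i j hij => Set.disjoint_iff_inter_eq_empty.2 (hR.2.2 i j hij),
    tsum_fintype]
  exact Finset.sum_congr rfl fun k _ => setLIntegral_congr_fun (hR.1 k) fun x hx => by
    rw [quantMap_eq_of_mem hR.2.2 c hx]

variable {E : Type*} [NormedAddCommGroup E] [MeasurableSpace E] [BorelSpace E]
  [SecondCountableTopology E] {R : Fin N → Set E} {X : Set E}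

theorem eLpNorm_sub_quantMap {P : Measure E} [IsFiniteMeasure P] {ρ : ℝ} (hρ : 0 < ρ)
    (hR : IsMeasPartition R X) (hPX : ∀ᵐ x ∂P, x ∈ X) (hP : HasFiniteMoment ρ P)
    (c : Fin N → E) :
    eLpNorm (fun x => x - quantMap R c x) (ENNReal.ofReal ρ) P
      = ENNReal.ofReal ((∑ k, ∫ x in R k, ‖x - c k‖ ^ ρ ∂P) ^ (1 / ρ)) := by
  have hint (k : Fin N) : Integrable (fun x => ‖x - c k‖ ^ ρ) (P.restrict (R k)) := by
    have := ((hP.memLp_id hρ).sub (memLp_const (c k))).integrable_norm_rpow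
      (by simpa using hρ) ENNReal.ofReal_ne_top
    rw [ENNReal.toReal_ofReal hρ.le] at this
    exact this.restrict
  calc eLpNorm (fun x => x - quantMap R c x) (ENNReal.ofReal ρ) P
      = (eLpNorm (fun x => x - quantMap R c x) (ENNReal.ofReal ρ) P ^ ρ) ^ (1 / ρ) := by
        rw [← ENNReal.rpow_mul, mul_one_div_cancel hρ.ne', ENNReal.rpow_one]
    _ = (∑ k, ENNReal.ofReal (∫ x in R k, ‖x - c k‖ ^ ρ ∂P)) ^ (1 / ρ) := by
        rw [← lintegral_ofReal_norm_rpow hρ,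
          lintegral_comp_quantMap hR hPX c fun x y => ENNReal.ofReal (‖x - y‖ ^ ρ)]
        congr 1
        refine Finset.sum_congr rfl fun k _ => (ofReal_integral_eq_lintegral_ofReal (hint k)
          (ae_of_all _ fun x => by positivity)).symm
    _ = _ := by
        rw [← ENNReal.ofReal_sum_of_nonneg fun k _ => integral_nonneg fun x => by positivity,
          ENNReal.ofReal_rpow_of_nonneg (by positivity) (by positivity)]

end Quantization

theorem stmt4_general {d q N : ℕ} (ρ : ℝ) (hρ : 1 ≤ ρ) (θ : ℝ)
    (X : Set (Euc d))
    (P : Measure (Euc d)) (hP : IsProbabilityMeasure P) (hPX : P X = 1)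
    (hPm : HasFiniteMoment ρ P)
    (R : Fin N → Set (Euc d)) (hR : IsMeasPartition R X)
    (c : Fin N → Euc d)
    (f : Euc d → Euc q)
    (Lf : NNReal) (hLip : LipschitzWith Lf f)
    (θd : ℝ) (hθd : θd = (∑ k, ∫ x in R k, ‖x - c k‖ ^ ρ ∂P) ^ (1/ρ)) :
    ∀ Q : Measure (Euc d), IsProbabilityMeasure Q → Q X = 1 → HasFiniteMoment ρ Q →
      Wass ρ P Q ≤ θ →
      Wass ρ (Q.map f) ((P.map (quantMap R c)).map f) ≤ (Lf : ℝ) * (θ + θd) := by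
  intro Q hQ _ hQm hW
  have hρ0 : 0 < ρ := by linarith
  have hρ1 : 1 ≤ ENNReal.ofReal ρ := by simpa using hρ
  have hPX' : ∀ᵐ x ∂P, x ∈ X :=
    ae_iff.2 ((prob_compl_eq_zero_iff (hR.2.1 ▸ MeasurableSet.iUnion hR.1)).2 hPX)
  have hΔ : Measurable (quantMap R c) :=
    Finset.measurable_sum _ fun i _ => measurable_const.indicator (hR.1 i)
  have : IsProbabilityMeasure (P.map (quantMap R c)) :=
    Measure.isProbabilityMeasure_map hΔ.aemeasurable
  rw [Wass_eq_toReal_eWass hρ0] at hW ⊢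
  have hθ : 0 ≤ θ := ENNReal.toReal_nonneg.trans hW
  have hθd₀ : 0 ≤ θd := hθd ▸ by positivity
  -- `Wass` truncates `⊤` to `0`, so `hW` bounds `eWass P Q` only once the latter is finite.
  have hPQ : eWass (ENNReal.ofReal ρ) P Q ≤ ENNReal.ofReal θ := by
    rw [← ENNReal.ofReal_toReal (eWass_lt_top hρ1 (hPm.memLp_id hρ0) (hQm.memLp_id hρ0)).ne]
    exact ENNReal.ofReal_le_ofReal hW
  refine ENNReal.toReal_le_of_le_ofReal (by positivity) ?_
  calc eWass (ENNReal.ofReal ρ) (Q.map f) ((P.map (quantMap R c)).map f)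
      ≤ Lf * eWass (ENNReal.ofReal ρ) Q (P.map (quantMap R c)) :=
        eWass_map_le_of_lipschitzWith hLip
    _ ≤ Lf * (eWass (ENNReal.ofReal ρ) P Q + ENNReal.ofReal θd) := by
        gcongr
        exact (eWass_map_le_add hρ1 hΔ).trans_eq
          (by rw [eWass_comm, eLpNorm_sub_quantMap hρ0 hR hPX' hPm, hθd])
    _ ≤ Lf * (ENNReal.ofReal θ + ENNReal.ofReal θd) := by gcongr
    _ = ENNReal.ofReal (Lf * (θ + θd)) := by
        rw [ENNReal.ofReal_mul Lf.coe_nonneg, ENNReal.ofReal_add hθ hθd₀, ENNReal.ofReal_coe_nnreal]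

/-- Lipschitz-based uncertainty propagation. If `f` is Lipschitz with
constant `L_f` and `θ_d = (Σ_k ∫_{R_k} ‖x - c_k‖^ρ dP)^{1/ρ}`, then every `Q ∈ B_θ(P)`
satisfies `W_ρ(f#Q, f#Δ_{R,C}#P) ≤ L_f (θ + θ_d)`. -/
theorem stmt4 {d q N : ℕ} (ρ : ℝ) (hρ : 1 ≤ ρ) (θ : ℝ) (hθ : 0 ≤ θ)
    (X : Set (Euc d)) (hXm : MeasurableSet X) (Y : Set (Euc q))
    (P : Measure (Euc d)) (hP : IsProbabilityMeasure P) (hPX : P X = 1)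
    (hPm : HasFiniteMoment ρ P)
    (R : Fin N → Set (Euc d)) (hR : IsMeasPartition R X)
    (c : Fin N → Euc d) (hc : ∀ k, c k ∈ X)
    (f : Euc d → Euc q) (hf : Measurable f) (hfXY : Set.MapsTo f X Y)
    (Lf : NNReal) (hLip : LipschitzWith Lf f)
    (θd : ℝ) (hθd : θd = (∑ k, ∫ x in R k, ‖x - c k‖ ^ ρ ∂P) ^ (1/ρ)) :
    ∀ Q : Measure (Euc d), IsProbabilityMeasure Q → Q X = 1 → HasFiniteMoment ρ Q →
      Wass ρ P Q ≤ θ →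
      Wass ρ (Q.map f) ((P.map (quantMap R c)).map f) ≤ (Lf : ℝ) * (θ + θd) :=
  stmt4_general ρ hρ θ X P hP hPX hPm R hR c f Lf hLip θd hθd
end
end

section
/- Consider the stochastic dynamical system x_{t+1} = f(x_t, ω_t) with x_0 ∼ P_{x_0}, ω_t ∼ P_ω i.i.d., where f : X × W → X (X ⊆ ℝ^d, W ⊆ ℝ^q) is measurable and piecewise Lipschitz, and let P_{x_t} denote the true state distribution at time t. Define the approximation scheme: P̂_{x_0} := P_{x_0}; for each t ≥ 0, P̂_t := P̂_{x_t} × P_ω, and P̂_{x_{t+1}} := f#Δ_{R_t,C_t}#P̂_t, where R_t is a measurable partition of X × W in N_t regions and C_t = {c_{t,1},…,c_{t,N_t}} ⊂ X × W are locations such that θ_{d,t} := ( Σ_{k=1}^{N_t} ∫_{R_{t,k}} ‖x − c_{t,k}‖^ρ dP̂_t(x) )^{1/ρ} ≤ ε for a given ε > 0 and all t ≥ 0. Let α_{0,k}, β_{0,k} ≥ 0 satisfy ‖f(x) − f(c_{0,k})‖^ρ ≤ α_{0,k}‖x − c_{0,k}‖^ρ + β_{0,k} for all x ∈ R_{0,k},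 and for t ≥ 1 let α_{t,k}, β_{t,k} ≥ 0 satisfy the same inequality for all x ∈ X × W, with α_{max,t} := max_k α_{t,k}. Define θ_1 := ( Σ_{k=1}^{N_0} α_{0,k} ∫_{R_{0,k}} ‖x − c_{0,k}‖^ρ dP̂_0(x) + Σ_{k=1}^{N_0} P̂_0(R_{0,k}) β_{0,k} )^{1/ρ} and, for t ≥ 1, θ_{t+1} := ( α_{max,t} (θ_t + ε)^ρ + Σ_{k=1}^{N_t} P̂_t(R_{t,k}) β_{t,k} )^{1/ρ}. Then for every t > 0, W_ρ(P_{x_t}, P̂_{x_t}) ≤ θ_t. -/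
open MeasureTheory ENNReal

noncomputable section

/-!
By induction on `t ≥ 1` we build a coupling of `P_{x_t}` and `P̂_{x_t}` whose transport cost is at
most `θ_t ^ ρ`. At `t = 1` both chains start from `P_{x_0} × P_ω`, and the diagonal coupling pushed
forward by `z ↦ (f z, f (Δ z))` has cost `∫ ‖f z - f (Δ z)‖ ^ ρ`, which the local linearization
bounds cell by cell. For the inductive step, feed the same noise sample to both chains (the
synchronous coupling) and push forward by `(z, ẑ) ↦ (f z, f (Δ ẑ))`. On the cell `ẑ ∈ R_{t,k}` the
global linearization at `c_{t,k}` bounds the cost by `α_max ‖z - Δ ẑ‖ ^ ρ + β_{t,k}`, and by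
Minkowski's inequality `‖z - Δ ẑ‖` has `L^ρ` norm at most `θ_t + θ_{d,t} ≤ θ_t + ε`.
-/

theorem ENNReal.ofReal_sum_mul {ι : Type*} (s : Finset ι) {x y : ι → ℝ} (hx : ∀ i ∈ s, 0 ≤ x i)
    (hy : ∀ i ∈ s, 0 ≤ y i) :
    ENNReal.ofReal (∑ i ∈ s, x i * y i) = ∑ i ∈ s, ENNReal.ofReal (x i) * ENNReal.ofReal (y i) := by
  rw [ENNReal.ofReal_sum_of_nonneg fun i hi => mul_nonneg (hx i hi) (hy i hi)]
  exact Finset.sum_congr rfl fun i hi => ENNReal.ofReal_mul (hx i hi)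

theorem ENNReal.rpow_one_div_le_ofReal_iff {x : ℝ≥0∞} {ρ θ : ℝ} (hρ : 0 < ρ) (hθ : 0 ≤ θ) :
    x ^ (1 / ρ) ≤ ENNReal.ofReal θ ↔ x ≤ ENNReal.ofReal (θ ^ ρ) := by
  rw [one_div, ENNReal.rpow_inv_le_iff hρ, ENNReal.ofReal_rpow_of_nonneg hθ hρ.le]

theorem ofReal_rpow_norm {E : Type*} [NormedAddCommGroup E] {ρ : ℝ} (hρ : 0 ≤ ρ) (x : E) :
    ENNReal.ofReal (‖x‖ ^ ρ) = ‖x‖ₑ ^ ρ := by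
  rw [← ENNReal.ofReal_rpow_of_nonneg (norm_nonneg x) hρ, ofReal_norm]

theorem lintegral_rpow_norm_sub_le_add {Ω E : Type*} [MeasurableSpace Ω] [NormedAddCommGroup E]
    {μ : Measure Ω} {ρ : ℝ} (hρ : 1 ≤ ρ) {u v w : Ω → E}
    (huv : AEStronglyMeasurable (fun ω => u ω - v ω) μ)
    (hvw : AEStronglyMeasurable (fun ω => v ω - w ω) μ) :
    (∫⁻ ω, ENNReal.ofReal (‖u ω - w ω‖ ^ ρ) ∂μ) ^ (1 / ρ) ≤
      (∫⁻ ω, ENNReal.ofReal (‖u ω - v ω‖ ^ ρ) ∂μ) ^ (1 / ρ) +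
        (∫⁻ ω, ENNReal.ofReal (‖v ω - w ω‖ ^ ρ) ∂μ) ^ (1 / ρ) := by
  simp only [ofReal_rpow_norm (zero_le_one.trans hρ)]
  simpa [eLpNorm'] using eLpNorm'_add_le huv hvw hρ

section Quantization

variable {Z : Type*} [MeasurableSpace Z] {N : ℕ} {R : Fin N → Set Z}

theorem IsMeasPartition.preimage {Ω : Type*} [MeasurableSpace Ω] (hR : IsMeasPartition R Set.univ)
    {s : Ω → Z} (hs : Measurable s) : IsMeasPartition (fun k => s ⁻¹' R k) Set.univ := by
  refine ⟨fun k => hs (hR.1 k), ?_, fun i j hij => ?_⟩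
  · rw [← Set.preimage_iUnion, hR.2.1, Set.preimage_univ]
  · rw [← Set.preimage_inter, hR.2.2 i j hij, Set.preimage_empty]

theorem IsMeasPartition.lintegral_eq_sum (hR : IsMeasPartition R Set.univ) (μ : Measure Z)
    (g : Z → ℝ≥0∞) : ∫⁻ z, g z ∂μ = ∑ k, ∫⁻ z in R k, g z ∂μ := by
  have hdisj : Pairwise (Function.onFun Disjoint R) := fun i j hij =>
    Set.disjoint_iff_inter_eq_empty.mpr (hR.2.2 i j hij)
  rw [← setLIntegral_univ, ← hR.2.1, lintegral_iUnion hR.1 hdisj, tsum_fintype]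

variable [AddCommMonoid Z]

theorem quantMap_eq_of_mem_s9 (hR : IsMeasPartition R Set.univ) (c : Fin N → Z) {k : Fin N} {z : Z}
    (hz : z ∈ R k) : quantMap R c z = c k := by
  refine (Finset.sum_eq_single k (fun i _ hik => Set.indicator_of_notMem (fun hzi => ?_) _)
    (by simp)).trans (Set.indicator_of_mem hz _)
  exact (Set.eq_empty_iff_forall_notMem.mp (hR.2.2 i k hik)) z ⟨hzi, hz⟩

theorem measurable_quantMap [MeasurableAdd₂ Z] (hR : IsMeasPartition R Set.univ) (c : Fin N → Z) :
    Measurable (quantMap R c) :=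
  Finset.measurable_sum _ fun k _ => measurable_const.indicator (hR.1 k)

theorem lintegral_comp_quantMap_s9 {Ω : Type*} [MeasurableSpace Ω] (hR : IsMeasPartition R Set.univ)
    (c : Fin N → Z) {s : Ω → Z} (hs : Measurable s) (μ : Measure Ω) (g : Ω → Z → ℝ≥0∞) :
    ∫⁻ ω, g ω (quantMap R c (s ω)) ∂μ = ∑ k, ∫⁻ ω in s ⁻¹' R k, g ω (c k) ∂μ := by
  rw [(hR.preimage hs).lintegral_eq_sum]
  refine Finset.sum_congr rfl fun k _ => setLIntegral_congr_fun (hs (hR.1 k)) fun ω hω => ?_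
  rw [quantMap_eq_of_mem_s9 hR c hω]

end Quantization

theorem lintegral_rpow_norm_sub_quantMap_le {Ω Z E : Type*} [MeasurableSpace Ω] [MeasurableSpace Z]
    [NormedAddCommGroup Z] [NormedAddCommGroup E] {N : ℕ} {R : Fin N → Set Z}
    (hR : IsMeasPartition R Set.univ) (c : Fin N → Z) (f : Z → E) {u s : Ω → Z}
    (hs : Measurable s) {ρ : ℝ} {α β : Fin N → ℝ} (hα : ∀ k, 0 ≤ α k) (hβ : ∀ k, 0 ≤ β k)
    (hlin : ∀ k ω, s ω ∈ R k → ‖f (u ω) - f (c k)‖ ^ ρ ≤ α k * ‖u ω - c k‖ ^ ρ + β k)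
    (μ : Measure Ω) :
    ∫⁻ ω, ENNReal.ofReal (‖f (u ω) - f (quantMap R c (s ω))‖ ^ ρ) ∂μ ≤
      ∑ k, (ENNReal.ofReal (α k) * ∫⁻ ω in s ⁻¹' R k, ENNReal.ofReal (‖u ω - c k‖ ^ ρ) ∂μ +
        μ (s ⁻¹' R k) * ENNReal.ofReal (β k)) := by
  rw [lintegral_comp_quantMap_s9 hR c hs μ fun ω z => ENNReal.ofReal (‖f (u ω) - f z‖ ^ ρ)]
  gcongr with k
  calc ∫⁻ ω in s ⁻¹' R k, ENNReal.ofReal (‖f (u ω) - f (c k)‖ ^ ρ) ∂μ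
      ≤ ∫⁻ ω in s ⁻¹' R k,
          (ENNReal.ofReal (α k) * ENNReal.ofReal (‖u ω - c k‖ ^ ρ) + ENNReal.ofReal (β k)) ∂μ := by
        refine setLIntegral_mono' (hs (hR.1 k)) fun ω hω => ?_
        rw [← ENNReal.ofReal_mul (hα k),
          ← ENNReal.ofReal_add (mul_nonneg (hα k) (by positivity)) (hβ k)]
        exact ENNReal.ofReal_le_ofReal (hlin k ω hω)
    _ = _ := by
        rw [lintegral_add_right _ measurable_const, lintegral_const_mul' _ _ ENNReal.ofReal_ne_top,
          setLIntegral_const, mul_comm (ENNReal.ofReal (β k))]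

section Moments

variable {E : Type*} [NormedAddCommGroup E] [MeasurableSpace E] [BorelSpace E]
  [SecondCountableTopology E] {ρ : ℝ} {μ : Measure E}

theorem HasFiniteMoment.memLp (h : HasFiniteMoment ρ μ) (hρ : 0 < ρ) :
    MemLp id (ENNReal.ofReal ρ) μ := by
  refine ⟨aestronglyMeasurable_id, ?_⟩
  rw [eLpNorm_lt_top_iff_lintegral_rpow_enorm_lt_top (by simpa using hρ) ofReal_ne_top,
    ENNReal.toReal_ofReal hρ.le]
  simpa only [HasFiniteMoment, ofReal_rpow_norm hρ.le, id] using h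

theorem HasFiniteMoment.integrable_rpow_norm_sub [IsFiniteMeasure μ] (h : HasFiniteMoment ρ μ)
    (hρ : 0 < ρ) (c : E) : Integrable (fun x => ‖x - c‖ ^ ρ) μ := by
  simpa [ENNReal.toReal_ofReal hρ.le] using
    ((h.memLp hρ).sub (memLp_const c)).integrable_norm_rpow (by simpa using hρ) ofReal_ne_top

theorem HasFiniteMoment.ofReal_setIntegral_rpow_norm_sub [IsFiniteMeasure μ]
    (h : HasFiniteMoment ρ μ) (hρ : 0 < ρ) (s : Set E) (c : E) :
    ENNReal.ofReal (∫ x in s, ‖x - c‖ ^ ρ ∂μ) = ∫⁻ x in s, ENNReal.ofReal (‖x - c‖ ^ ρ) ∂μ :=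
  ofReal_integral_eq_lintegral_ofReal (h.integrable_rpow_norm_sub hρ c).restrict
    (Filter.Eventually.of_forall fun _ => by positivity)

theorem lintegral_rpow_norm_sub_quantMap [IsFiniteMeasure μ] (hμ : HasFiniteMoment ρ μ) (hρ : 0 < ρ)
    {N : ℕ} {R : Fin N → Set E} (hR : IsMeasPartition R Set.univ) (c : Fin N → E) :
    ∫⁻ z, ENNReal.ofReal (‖z - quantMap R c z‖ ^ ρ) ∂μ =
      ENNReal.ofReal (∑ k, ∫ z in R k, ‖z - c k‖ ^ ρ ∂μ) := by
  refine (lintegral_comp_quantMap_s9 hR c measurable_id μ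
    fun z q => ENNReal.ofReal (‖z - q‖ ^ ρ)).trans ?_
  rw [ENNReal.ofReal_sum_of_nonneg fun k _ => by positivity]
  exact Finset.sum_congr rfl fun k _ => (hμ.ofReal_setIntegral_rpow_norm_sub hρ _ _).symm

end Moments

section Couplings

variable {β : Type*} [MeasurableSpace β] {μ ν : Measure β}

theorem map_mem_couplings {α : Type*} [MeasurableSpace α] {m : Measure α} [IsProbabilityMeasure m]
    {F G : α → β} (hF : Measurable F) (hG : Measurable G) :
    m.map (fun a => (F a, G a)) ∈ Couplings (m.map F) (m.map G) :=
  ⟨Measure.isProbabilityMeasure_map (hF.prodMk hG).aemeasurable,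
    by rw [Measure.map_map measurable_fst (hF.prodMk hG)]; rfl,
    by rw [Measure.map_map measurable_snd (hF.prodMk hG)]; rfl⟩

theorem isProbabilityMeasure_of_mem_couplings_right {γ : Measure (β × β)} (hγ : γ ∈ Couplings μ ν) :
    IsProbabilityMeasure ν := by
  obtain ⟨hprob, -, rfl⟩ := hγ
  exact Measure.isProbabilityMeasure_map measurable_snd.aemeasurable

theorem prodMap_mem_couplings {β' : Type*} [MeasurableSpace β']
    {γ : Measure (β × β)} (hγ : γ ∈ Couplings μ ν) {F G : β → β'} (hF : Measurable F)
    (hG : Measurable G) : γ.map (Prod.map F G) ∈ Couplings (μ.map F) (ν.map G) := by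
  obtain ⟨hprob, rfl, rfl⟩ := hγ
  rw [Measure.map_map hF measurable_fst, Measure.map_map hG measurable_snd]
  exact map_mem_couplings (hF.comp measurable_fst) (hG.comp measurable_snd)

variable [NormedAddCommGroup β] {ρ θ : ℝ}

def transportCost (ρ : ℝ) (γ : Measure (β × β)) : ℝ≥0∞ :=
  ∫⁻ p, ENNReal.ofReal (‖p.1 - p.2‖ ^ ρ) ∂γ

def HasCouplingWithin (ρ : ℝ) (μ ν : Measure β) (θ : ℝ) : Prop :=
  0 ≤ θ ∧ ∃ γ ∈ Couplings μ ν, transportCost ρ γ ≤ ENNReal.ofReal (θ ^ ρ)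

theorem HasCouplingWithin.wass_le (hρ : 0 < ρ) (h : HasCouplingWithin ρ μ ν θ) :
    Wass ρ μ ν ≤ θ := by
  obtain ⟨hθ, γ, hγ, hcost⟩ := h
  have hinf : (⨅ γ ∈ Couplings μ ν, transportCost ρ γ).toReal ≤ θ ^ ρ :=
    ENNReal.toReal_le_of_le_ofReal (by positivity) ((iInf₂_le γ hγ).trans hcost)
  calc Wass ρ μ ν ≤ (θ ^ ρ) ^ (1 / ρ) := by unfold Wass; gcongr; exact hinf
    _ = θ := by rw [one_div, Real.rpow_rpow_inv hθ hρ.ne']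

theorem hasCouplingWithin_rpow_one_div {b : ℝ} (hρ : ρ ≠ 0) (hb : 0 ≤ b) {γ : Measure (β × β)}
    (hγ : γ ∈ Couplings μ ν) (hcost : transportCost ρ γ ≤ ENNReal.ofReal b) :
    HasCouplingWithin ρ μ ν (b ^ (1 / ρ)) :=
  ⟨by positivity, γ, hγ, by rwa [one_div, Real.rpow_inv_rpow hb hρ]⟩

end Couplings

section SynchronousCoupling

variable {β W : Type*} [MeasurableSpace β] [MeasurableSpace W]

def synchronousCoupling (γ : Measure (β × β)) (κ : Measure W) : Measure ((β × W) × (β × W)) :=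
  (γ.prod κ).map fun p => ((p.1.1, p.2), (p.1.2, p.2))

theorem measurable_synchronize :
    Measurable fun p : (β × β) × W => ((p.1.1, p.2), (p.1.2, p.2)) := by
  fun_prop

variable {μ ν : Measure β} {γ : Measure (β × β)} {κ : Measure W} [IsProbabilityMeasure κ]

theorem synchronousCoupling_mem_couplings (hγ : γ ∈ Couplings μ ν) :
    synchronousCoupling γ κ ∈ Couplings (μ.prod κ) (ν.prod κ) := by
  obtain ⟨hprob, rfl, rfl⟩ := hγ
  refine ⟨Measure.isProbabilityMeasure_map measurable_synchronize.aemeasurable, ?_, ?_⟩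
  · conv_rhs =>
      rw [← Measure.map_id (μ := κ), Measure.map_prod_map γ κ measurable_fst measurable_id]
    rw [synchronousCoupling, Measure.map_map measurable_fst measurable_synchronize]
    rfl
  · conv_rhs =>
      rw [← Measure.map_id (μ := κ), Measure.map_prod_map γ κ measurable_snd measurable_id]
    rw [synchronousCoupling, Measure.map_map measurable_snd measurable_synchronize]
    rfl

variable [NormedAddCommGroup β] [NormedAddCommGroup W] [BorelSpace β] [SecondCountableTopology β]
  [BorelSpace W] [SecondCountableTopology W]

theorem transportCost_synchronousCoupling [SFinite γ] (ρ : ℝ) :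
    transportCost ρ (synchronousCoupling γ κ) = transportCost ρ γ := by
  have hcost : Measurable fun p : β × β => ENNReal.ofReal (‖p.1 - p.2‖ ^ ρ) := by fun_prop
  rw [transportCost, synchronousCoupling, lintegral_map (by fun_prop) measurable_synchronize]
  simp only [Prod.mk_sub_mk, sub_self, Prod.norm_mk, norm_zero, norm_nonneg, max_eq_left]
  rw [← lintegral_map hcost measurable_fst, Measure.map_fst_prod, measure_univ, one_smul]
  rfl

end SynchronousCoupling

section ErrorPropagation

variable {Z : Type*} [NormedAddCommGroup Z] [MeasurableSpace Z] [BorelSpace Z]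
  [SecondCountableTopology Z] {X W E : Type*} [NormedAddCommGroup X] [MeasurableSpace X]
  [BorelSpace X] [SecondCountableTopology X] [NormedAddCommGroup W] [MeasurableSpace W]
  [BorelSpace W] [SecondCountableTopology W] [NormedAddCommGroup E] [MeasurableSpace E] {ρ : ℝ}

theorem hasCouplingWithin_map_quantMap_self {m : Measure Z} [IsProbabilityMeasure m]
    (hm : HasFiniteMoment ρ m) (hρ : 0 < ρ) {f : Z → E} (hf : Measurable f) {N : ℕ}
    {R : Fin N → Set Z} (hR : IsMeasPartition R Set.univ)
    (c : Fin N → Z) {α β : Fin N → ℝ} (hα : ∀ k, 0 ≤ α k) (hβ : ∀ k, 0 ≤ β k)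
    (hlin : ∀ k, ∀ z ∈ R k, ‖f z - f (c k)‖ ^ ρ ≤ α k * ‖z - c k‖ ^ ρ + β k) :
    HasCouplingWithin ρ (m.map f) ((m.map (quantMap R c)).map f)
      ((∑ k, α k * ∫ z in R k, ‖z - c k‖ ^ ρ ∂m + ∑ k, (m (R k)).toReal * β k) ^ (1 / ρ)) := by
  have hQ := measurable_quantMap hR c
  have hint : ∀ k, 0 ≤ ∫ z in R k, ‖z - c k‖ ^ ρ ∂m := fun k => by positivity
  rw [Measure.map_map hf hQ]
  refine hasCouplingWithin_rpow_one_div hρ.ne' ?_ (map_mem_couplings hf (hf.comp hQ)) ?_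
  · exact add_nonneg (Finset.sum_nonneg fun k _ => mul_nonneg (hα k) (hint k))
      (Finset.sum_nonneg fun k _ => mul_nonneg ENNReal.toReal_nonneg (hβ k))
  calc transportCost ρ (m.map fun z => (f z, (f ∘ quantMap R c) z))
      ≤ ∫⁻ z, ENNReal.ofReal (‖f z - f (quantMap R c z)‖ ^ ρ) ∂m := lintegral_map_le _ _
    _ ≤ ∑ k, (ENNReal.ofReal (α k) * ∫⁻ z in id ⁻¹' R k, ENNReal.ofReal (‖z - c k‖ ^ ρ) ∂m +
          m (id ⁻¹' R k) * ENNReal.ofReal (β k)) :=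
        lintegral_rpow_norm_sub_quantMap_le hR c f measurable_id hα hβ hlin m
    _ = _ := by
        rw [ENNReal.ofReal_add (Finset.sum_nonneg fun k _ => mul_nonneg (hα k) (hint k))
            (Finset.sum_nonneg fun k _ => mul_nonneg ENNReal.toReal_nonneg (hβ k)),
          ENNReal.ofReal_sum_mul _ (fun k _ => hα k) (fun k _ => hint k),
          ENNReal.ofReal_sum_mul _ (fun k _ => ENNReal.toReal_nonneg) (fun k _ => hβ k),
          ← Finset.sum_add_distrib]
        refine Finset.sum_congr rfl fun k _ => ?_
        rw [hm.ofReal_setIntegral_rpow_norm_sub hρ, ENNReal.ofReal_toReal (measure_ne_top _ _)]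
        rfl

theorem lintegral_synchronousCoupling_quantMap_le {θ ε : ℝ} (hρ : 1 ≤ ρ) (hθ : 0 ≤ θ) (hε : 0 ≤ ε)
    {μ ν : Measure X} {γ : Measure (X × X)} (hγ : γ ∈ Couplings μ ν)
    (hcost : transportCost ρ γ ≤ ENNReal.ofReal (θ ^ ρ)) {κ : Measure W} [IsProbabilityMeasure κ]
    (hν : HasFiniteMoment ρ (ν.prod κ)) {N : ℕ} {R : Fin N → Set (X × W)}
    (hR : IsMeasPartition R Set.univ) (c : Fin N → X × W)
    (hquant : (∑ k, ∫ z in R k, ‖z - c k‖ ^ ρ ∂(ν.prod κ)) ^ (1 / ρ) ≤ ε) :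
    ∫⁻ p, ENNReal.ofReal (‖p.1 - quantMap R c p.2‖ ^ ρ) ∂(synchronousCoupling γ κ) ≤
      ENNReal.ofReal ((θ + ε) ^ ρ) := by
  have hρ0 : 0 < ρ := zero_lt_one.trans_le hρ
  have := hγ.1
  have := isProbabilityMeasure_of_mem_couplings_right hγ
  have hQ := measurable_quantMap hR c
  have hΓ := synchronousCoupling_mem_couplings (κ := κ) hγ
  rw [← ENNReal.rpow_one_div_le_ofReal_iff hρ0 (add_nonneg hθ hε), ENNReal.ofReal_add hθ hε]
  have hcoupling : (transportCost ρ (synchronousCoupling γ κ)) ^ (1 / ρ) ≤ ENNReal.ofReal θ := by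
    rwa [transportCost_synchronousCoupling, ENNReal.rpow_one_div_le_ofReal_iff hρ0 hθ]
  have hquantΓ : (∫⁻ p, ENNReal.ofReal (‖p.2 - quantMap R c p.2‖ ^ ρ) ∂(synchronousCoupling γ κ))
      ^ (1 / ρ) ≤ ENNReal.ofReal ε := by
    rw [← lintegral_map (f := fun z => ENNReal.ofReal (‖z - quantMap R c z‖ ^ ρ)) (by fun_prop)
        measurable_snd, hΓ.2.2, lintegral_rpow_norm_sub_quantMap hν hρ0 hR c,
      ENNReal.ofReal_rpow_of_nonneg (by positivity) (by positivity)]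
    exact ENNReal.ofReal_le_ofReal hquant
  exact (lintegral_rpow_norm_sub_le_add hρ (by fun_prop) (by fun_prop)).trans
    (add_le_add hcoupling hquantΓ)

theorem HasCouplingWithin.map_quantMap {θ ε A : ℝ} (hρ : 1 ≤ ρ) (hε : 0 ≤ ε) {μ ν : Measure X}
    (h : HasCouplingWithin ρ μ ν θ) {κ : Measure W} [IsProbabilityMeasure κ]
    (hν : HasFiniteMoment ρ (ν.prod κ)) {f : X × W → E} (hf : Measurable f) {N : ℕ}
    {R : Fin N → Set (X × W)} (hR : IsMeasPartition R Set.univ)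
    (c : Fin N → X × W) (hquant : (∑ k, ∫ z in R k, ‖z - c k‖ ^ ρ ∂(ν.prod κ)) ^ (1 / ρ) ≤ ε)
    {β : Fin N → ℝ} (hA : 0 ≤ A) (hβ : ∀ k, 0 ≤ β k)
    (hlin : ∀ k z, ‖f z - f (c k)‖ ^ ρ ≤ A * ‖z - c k‖ ^ ρ + β k) :
    HasCouplingWithin ρ ((μ.prod κ).map f) (((ν.prod κ).map (quantMap R c)).map f)
      ((A * (θ + ε) ^ ρ + ∑ k, ((ν.prod κ) (R k)).toReal * β k) ^ (1 / ρ)) := by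
  obtain ⟨hθ, γ, hγ, hcost⟩ := h
  have hρ0 : 0 < ρ := zero_lt_one.trans_le hρ
  have := isProbabilityMeasure_of_mem_couplings_right hγ
  have hQ := measurable_quantMap hR c
  set Γ := synchronousCoupling γ κ
  have hΓ : Γ ∈ Couplings (μ.prod κ) (ν.prod κ) := synchronousCoupling_mem_couplings hγ
  have hΓR : ∀ k, Γ (Prod.snd ⁻¹' R k) = (ν.prod κ) (R k) := fun k => by
    rw [← Measure.map_apply measurable_snd (hR.1 k), hΓ.2.2]
  have hβsum : 0 ≤ ∑ k, ((ν.prod κ) (R k)).toReal * β k :=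
    Finset.sum_nonneg fun k _ => mul_nonneg ENNReal.toReal_nonneg (hβ k)
  have hΓQ := lintegral_synchronousCoupling_quantMap_le hρ hθ hε hγ hcost hν hR c hquant
  rw [Measure.map_map hf hQ]
  refine hasCouplingWithin_rpow_one_div hρ0.ne' (by positivity)
    (prodMap_mem_couplings hΓ hf (hf.comp hQ)) ?_
  calc transportCost ρ (Γ.map (Prod.map f (f ∘ quantMap R c)))
      ≤ ∫⁻ p, ENNReal.ofReal (‖f p.1 - f (quantMap R c p.2)‖ ^ ρ) ∂Γ := lintegral_map_le _ _
    _ ≤ ∑ k, (ENNReal.ofReal A * ∫⁻ p in Prod.snd ⁻¹' R k, ENNReal.ofReal (‖p.1 - c k‖ ^ ρ) ∂Γ +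
          Γ (Prod.snd ⁻¹' R k) * ENNReal.ofReal (β k)) :=
        lintegral_rpow_norm_sub_quantMap_le hR c f measurable_snd (fun _ => hA) hβ
          (fun k p _ => hlin k p.1) Γ
    _ = ENNReal.ofReal A * ∫⁻ p, ENNReal.ofReal (‖p.1 - quantMap R c p.2‖ ^ ρ) ∂Γ +
          ∑ k, ENNReal.ofReal ((ν.prod κ) (R k)).toReal * ENNReal.ofReal (β k) := by
        simp only [Finset.sum_add_distrib, ← Finset.mul_sum, hΓR,
          ENNReal.ofReal_toReal (measure_ne_top _ _),
          lintegral_comp_quantMap_s9 hR c measurable_snd Γ fun p z => ENNReal.ofReal (‖p.1 - z‖ ^ ρ)]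
    _ ≤ ENNReal.ofReal A * ENNReal.ofReal ((θ + ε) ^ ρ) +
          ∑ k, ENNReal.ofReal ((ν.prod κ) (R k)).toReal * ENNReal.ofReal (β k) := by
        gcongr
    _ = _ := by
        rw [ENNReal.ofReal_add (by positivity) hβsum, ENNReal.ofReal_mul hA,
          ENNReal.ofReal_sum_mul _ (fun k _ => ENNReal.toReal_nonneg) (fun k _ => hβ k)]

end ErrorPropagation

theorem stmt9_general {d q : ℕ} (ρ : ℝ) (hρ : 1 ≤ ρ) (ε : ℝ) (hε : 0 < ε)
    -- the dynamics: measurable and piecewise Lipschitz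
    (f : Euc d × Euc q → Euc d) (hf : Measurable f)
    -- initial and noise distributions
    (Px0 : Measure (Euc d)) (hPx0 : IsProbabilityMeasure Px0)
    (Pω : Measure (Euc q)) (hPω : IsProbabilityMeasure Pω)
    -- the true state distributions: `P_{x_{t+1}} = f#(P_{x_t} × P_ω)`
    (Px : ℕ → Measure (Euc d))
    (hPx0' : Px 0 = Px0)
    (hPxsucc : ∀ t, Px (t + 1) = ((Px t).prod Pω).map f)
    -- partitions and locations on the joint state-noise space
    (N : ℕ → ℕ)
    (R : (t : ℕ) → Fin (N t) → Set (Euc d × Euc q))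
    (c : (t : ℕ) → Fin (N t) → Euc d × Euc q)
    (hR : ∀ t, IsMeasPartition (R t) Set.univ)
    -- the approximating state distributions: `P̂_{x_0} = P_{x_0}`,
    -- `P̂_{x_{t+1}} = f#Δ_{R_t,C_t}#(P̂_{x_t} × P_ω)`
    (Phat : ℕ → Measure (Euc d))
    (hPhat0 : Phat 0 = Px0)
    (hPhatsucc : ∀ t,
      Phat (t + 1) = (((Phat t).prod Pω).map (quantMap (R t) (c t))).map f)
    -- all measures involved have finite ρ-th moments
    (hmomJoint : ∀ t, HasFiniteMoment ρ ((Phat t).prod Pω))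
    -- the quantization errors satisfy `θ_{d,t} ≤ ε`
    (hθd : ∀ t,
      (∑ k, ∫ z in R t k, ‖z - c t k‖ ^ ρ ∂((Phat t).prod Pω)) ^ (1/ρ) ≤ ε)
    -- linearization coefficients: local at `t = 0`, global for `t ≥ 1`
    (α β : (t : ℕ) → Fin (N t) → ℝ)
    (hα : ∀ t k, 0 ≤ α t k) (hβ : ∀ t k, 0 ≤ β t k)
    (hlin0 : ∀ k, ∀ z ∈ R 0 k,
      ‖f z - f (c 0 k)‖ ^ ρ ≤ α 0 k * ‖z - c 0 k‖ ^ ρ + β 0 k)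
    (hlin : ∀ t, 1 ≤ t → ∀ k, ∀ z : Euc d × Euc q,
      ‖f z - f (c t k)‖ ^ ρ ≤ α t k * ‖z - c t k‖ ^ ρ + β t k)
    (αmax : ℕ → ℝ) (hαmax : ∀ t, IsGreatest (Set.range (α t)) (αmax t))
    -- the recursive error bounds
    (θ : ℕ → ℝ)
    (hθ1 : θ 1 = (∑ k, α 0 k * ∫ z in R 0 k, ‖z - c 0 k‖ ^ ρ ∂((Phat 0).prod Pω) +
      ∑ k, (((Phat 0).prod Pω) (R 0 k)).toReal * β 0 k) ^ (1/ρ))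
    (hθsucc : ∀ t, 1 ≤ t → θ (t + 1) = (αmax t * (θ t + ε) ^ ρ +
      ∑ k, (((Phat t).prod Pω) (R t k)).toReal * β t k) ^ (1/ρ)) :
    ∀ t, 0 < t → Wass ρ (Px t) (Phat t) ≤ θ t := by
  have hρ0 : 0 < ρ := zero_lt_one.trans_le hρ
  have key : ∀ t, 1 ≤ t → HasCouplingWithin ρ (Px t) (Phat t) (θ t) := by
    intro t ht
    induction t, ht using Nat.le_induction with
    | base =>
      rw [hθ1, hPxsucc, hPhatsucc, hPx0', hPhat0]
      exact hasCouplingWithin_map_quantMap_self (hPhat0 ▸ hmomJoint 0) hρ0 hf (hR 0) (c 0) (hα 0)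
        (hβ 0) hlin0
    | succ n hn ih =>
      obtain ⟨k, hk⟩ := (hαmax n).1
      rw [hθsucc n hn, hPxsucc, hPhatsucc]
      exact ih.map_quantMap hρ hε.le (hmomJoint n) hf (hR n) (c n) (hθd n) (hk ▸ hα n k) (hβ n)
        fun k z => (hlin n hn k z).trans (by gcongr; exact (hαmax n).2 ⟨k, rfl⟩)
  exact fun t ht => (key t ht).wass_le hρ0

/-- Theorem: approximation error dynamics, part i. For the stochastic
system `x_{t+1} = f(x_t, ω_t)` with true state distributions `P_{x_t}` and the discrete
approximation scheme `P̂_{x_{t+1}} = f#Δ_{R_t,C_t}#(P̂_{x_t} × P_ω)` with per-step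
quantization errors `θ_{d,t} ≤ ε`, the recursively defined error bounds `θ_t` satisfy
`W_ρ(P_{x_t}, P̂_{x_t}) ≤ θ_t` for all `t > 0`. -/
theorem stmt9 {d q : ℕ} (ρ : ℝ) (hρ : 1 ≤ ρ) (ε : ℝ) (hε : 0 < ε)
    -- the dynamics: measurable and piecewise Lipschitz
    (f : Euc d × Euc q → Euc d) (hf : Measurable f)
    (hpw : ∃ (M : ℕ) (S : Fin M → Set (Euc d × Euc q)) (L : NNReal),
      (⋃ i, S i) = Set.univ ∧ ∀ i, LipschitzOnWith L f (S i))
    -- initial and noise distributions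
    (Px0 : Measure (Euc d)) (hPx0 : IsProbabilityMeasure Px0)
    (Pω : Measure (Euc q)) (hPω : IsProbabilityMeasure Pω)
    -- the true state distributions: `P_{x_{t+1}} = f#(P_{x_t} × P_ω)`
    (Px : ℕ → Measure (Euc d))
    (hPx0' : Px 0 = Px0)
    (hPxsucc : ∀ t, Px (t + 1) = ((Px t).prod Pω).map f)
    -- partitions and locations on the joint state-noise space
    (N : ℕ → ℕ)
    (R : (t : ℕ) → Fin (N t) → Set (Euc d × Euc q))
    (c : (t : ℕ) → Fin (N t) → Euc d × Euc q)
    (hR : ∀ t, IsMeasPartition (R t) Set.univ)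
    -- the approximating state distributions: `P̂_{x_0} = P_{x_0}`,
    -- `P̂_{x_{t+1}} = f#Δ_{R_t,C_t}#(P̂_{x_t} × P_ω)`
    (Phat : ℕ → Measure (Euc d))
    (hPhat0 : Phat 0 = Px0)
    (hPhatsucc : ∀ t,
      Phat (t + 1) = (((Phat t).prod Pω).map (quantMap (R t) (c t))).map f)
    -- all measures involved have finite ρ-th moments
    (hmomPx : ∀ t, HasFiniteMoment ρ (Px t))
    (hmomPhat : ∀ t, HasFiniteMoment ρ (Phat t))
    (hmomJoint : ∀ t, HasFiniteMoment ρ ((Phat t).prod Pω))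
    (hmomω : HasFiniteMoment ρ Pω)
    -- the quantization errors satisfy `θ_{d,t} ≤ ε`
    (hθd : ∀ t,
      (∑ k, ∫ z in R t k, ‖z - c t k‖ ^ ρ ∂((Phat t).prod Pω)) ^ (1/ρ) ≤ ε)
    -- linearization coefficients: local at `t = 0`, global for `t ≥ 1`
    (α β : (t : ℕ) → Fin (N t) → ℝ)
    (hα : ∀ t k, 0 ≤ α t k) (hβ : ∀ t k, 0 ≤ β t k)
    (hlin0 : ∀ k, ∀ z ∈ R 0 k,
      ‖f z - f (c 0 k)‖ ^ ρ ≤ α 0 k * ‖z - c 0 k‖ ^ ρ + β 0 k)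
    (hlin : ∀ t, 1 ≤ t → ∀ k, ∀ z : Euc d × Euc q,
      ‖f z - f (c t k)‖ ^ ρ ≤ α t k * ‖z - c t k‖ ^ ρ + β t k)
    (αmax : ℕ → ℝ) (hαmax : ∀ t, IsGreatest (Set.range (α t)) (αmax t))
    -- the recursive error bounds
    (θ : ℕ → ℝ)
    (hθ1 : θ 1 = (∑ k, α 0 k * ∫ z in R 0 k, ‖z - c 0 k‖ ^ ρ ∂((Phat 0).prod Pω) +
      ∑ k, (((Phat 0).prod Pω) (R 0 k)).toReal * β 0 k) ^ (1/ρ))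
    (hθsucc : ∀ t, 1 ≤ t → θ (t + 1) = (αmax t * (θ t + ε) ^ ρ +
      ∑ k, (((Phat t).prod Pω) (R t k)).toReal * β t k) ^ (1/ρ)) :
    ∀ t, 0 < t → Wass ρ (Px t) (Phat t) ≤ θ t :=
  stmt9_general ρ hρ ε hε f hf Px0 hPx0 Pω hPω Px hPx0' hPxsucc N R c hR Phat hPhat0 hPhatsucc
    hmomJoint hθd α β hα hβ hlin0 hlin αmax hαmax θ hθ1 hθsucc
end
end
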